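/- arXiv:2502.10126 — 2 statements merged into one kernel-verified Lean document; each statement's English description precedes it below -/
import Mathlib

section
/- The fuzzy relation φ(w,w') = ⨅_{A∈Ψ} (V_A(w) ↔ V'_A(w')) is the greatest fuzzy relation satisfying both φ⁻¹ ∘ V_A ≤ V'_A and φ ∘ V'_A ≤ V_A for all A ∈ Ψ; i.e., a fuzzy relation ψ satisfies these two conditions for all A ∈ Ψ iff ψ ≤ φ pointwise. -/
/-! Residuation `a ⊓ b ≤ c ↔ a ≤ b ⇨ c` turns each of the two composition conditions into a
pointwise bound `ψ (w, w') ≤ V A w ⇨ V' A w'` (resp. `V' A w' ⇨ V A w`); together, over all `A`,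
these say exactly `ψ ≤ φ`. -/

section
variable {α ι κ : Type*} [Order.Frame α]

theorem iSup_inf_le_iff_forall_le_himp {f g : ι → α} {b : α} :
    (⨆ i, f i ⊓ g i) ≤ b ↔ ∀ i, f i ≤ g i ⇨ b := by
  simp only [iSup_le_iff, le_himp_iff]

theorem forall_iSup_inf_le_and_iff_le_himp_inf_himp {ψ : ι × κ → α} {v : ι → α} {v' : κ → α} :
    ((∀ j, (⨆ i, ψ (i, j) ⊓ v i) ≤ v' j) ∧ (∀ i, (⨆ j, ψ (i, j) ⊓ v' j) ≤ v i)) ↔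
      ∀ p, ψ p ≤ (v p.1 ⇨ v' p.2) ⊓ (v' p.2 ⇨ v p.1) := by
  simp only [iSup_inf_le_iff_forall_le_himp, le_inf_iff, Prod.forall, forall_and]
  rw [@forall_comm κ]

end

theorem greatest_weak_prebisimulation {H : Type*} [Order.Frame H]
    {W W' Ψ : Type*} (V : Ψ → W → H) (V' : Ψ → W' → H)
    (φ : W × W' → H)
    (hφ : φ = fun p => ⨅ A, (V A p.1 ⇨ V' A p.2) ⊓ (V' A p.2 ⇨ V A p.1))
    (ψ : W × W' → H) :
    ((∀ A, (∀ w', (⨆ w, ψ (w, w') ⊓ V A w) ≤ V' A w') ∧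
        (∀ w, (⨆ w', ψ (w, w') ⊓ V' A w') ≤ V A w)) ↔ ψ ≤ φ) := by
  subst hφ
  simp only [forall_iSup_inf_le_and_iff_le_himp_inf_himp, Pi.le_def, le_iInf_iff]
  exact forall_comm
end

section
/- Let φ : W×W' → H satisfy φ(u,u') ≤ V_B(u) ↔ V'_B(u') for all u ∈ W, u' ∈ W', and φ⁻¹ ∘ R ≤ R' ∘ φ⁻¹ (as fuzzy relations). Define V_{◇B}(u) = ⨆_{v} R(u,v) ∧ V_B(v) and V'_{◇B}(u') = ⨆_{v'} R'(u',v') ∧ V'_B(v'). Then φ(u,u') ≤ V_{◇B}(u) → V'_{◇B}(u') for all u ∈ W, u' ∈ W'. -/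
/-! By the forth condition `φ⁻¹ ∘ R ≤ R' ∘ φ⁻¹`, the degree `φ (u, u') ⊓ R (u, v)` is bounded by
the `R'`-successors `v'` of `u'` weighted with `φ (v, v')`; then `φ (v, v') ⊓ V_B v ≤ V'_B v'`
carries the valuation of each successor across. -/

theorem inf_iSup_inf_le_iSup_inf_of_forth {H : Type*} [Order.Frame H] {ι κ : Type*}
    (a : H) (r x : ι → H) (r' y : κ → H) (p : ι → κ → H)
    (hforth : ∀ i, a ⊓ r i ≤ ⨆ j, r' j ⊓ p i j) (htransfer : ∀ i j, p i j ⊓ x i ≤ y j) :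
    a ⊓ ⨆ i, r i ⊓ x i ≤ ⨆ j, r' j ⊓ y j := by
  rw [inf_iSup_eq]
  refine iSup_le fun i => ?_
  calc a ⊓ (r i ⊓ x i) = (a ⊓ r i) ⊓ x i := (inf_assoc ..).symm
    _ ≤ (⨆ j, r' j ⊓ p i j) ⊓ x i := inf_le_inf_right _ (hforth i)
    _ = ⨆ j, r' j ⊓ (p i j ⊓ x i) := by simp only [iSup_inf_eq, inf_assoc]
    _ ≤ ⨆ j, r' j ⊓ y j := iSup_mono fun j => inf_le_inf_left _ (htransfer i j)

theorem diamond_forward_step {H : Type*} [Order.Frame H] {W W' : Type*}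
    (φ : W × W' → H) (R : W × W → H) (R' : W' × W' → H)
    (VB : W → H) (VB' : W' → H)
    (h1 : ∀ u u', φ (u, u') ≤ (VB u ⇨ VB' u') ⊓ (VB' u' ⇨ VB u))
    (h2 : ∀ u' v, (⨆ u, φ (u, u') ⊓ R (u, v)) ≤ ⨆ v', R' (u', v') ⊓ φ (v, v')) :
    ∀ u u', φ (u, u') ≤ (⨆ v, R (u, v) ⊓ VB v) ⇨ (⨆ v', R' (u', v') ⊓ VB' v') := by
  intro u u'
  rw [le_himp_iff]
  refine inf_iSup_inf_le_iSup_inf_of_forth _ _ _ _ _ (fun v v' => φ (v, v'))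
    (fun v => ?_) (fun v v' => ?_)
  · exact (le_iSup (fun w => φ (w, u') ⊓ R (w, v)) u).trans (h2 u' v)
  · exact le_himp_iff.1 ((h1 v v').trans inf_le_left)
end
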